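/- arXiv:1410.8226 — 2 statements merged into one kernel-verified Lean document; each statement's English description precedes it below -/
import Mathlib

section
/- Let β ∈ [0,1/4] and let u ∈ ℝ^n satisfy ∑_{j=1}^n u_j = n and 1−β ≤ u_j ≤ 1+β for all j. Then (2(1−β) + 6(1−β)ln(1−β) + 6(1−β)ln²(1−β))·n·δ(u) ≤ Δ22(u) ≤ (2(1+β) + 6(1+β)ln(1+β) + 6(1+β)ln²(1+β))·n·δ(u). -/
/-- The entropy proximity measure `δ(u) = (1/n) ∑ u_j ln u_j`. -/
noncomputable def entropyDelta (n : ℕ) (u : Fin n → ℝ) : ℝ :=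
  (1 / (n : ℝ)) * ∑ j, u j * Real.log (u j)

/-- `Δ22(u) = ∑ u_j² ln² u_j`. -/
noncomputable def Delta22 (n : ℕ) (u : Fin n → ℝ) : ℝ :=
  ∑ j, (u j) ^ 2 * Real.log (u j) ^ 2

/-!
With `g(u) = u log u + 1 - u` (Mathlib's `klFun`), the constraint `∑ u_j = n` turns `n δ(u)` into
`∑ g(u_j)`, so it suffices to compare `u² log² u` with `g(u)` pointwise on `[a, b] = [1 - β, 1 + β]`.
Since `g(1) = g'(1) = 0` and `g'' = 1/u`, we have `(u - 1)²/(2b) ≤ g(u) ≤ (u - 1)²/(2a)`, while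
`u - 1 ≤ u log u ≤ u (u - 1)` gives `a²(u - 1)² ≤ u² log² u ≤ b²(u - 1)²`. Hence
`2a³ g(u) ≤ u² log² u ≤ 2b³ g(u)`, and for `β ≤ 1/4` the constants of the theorem satisfy
`c(a) ≤ 2a³` and `2b³ ≤ c(b)`, where `c(x) = 2x + 6x log x + 6x log² x`.
-/

open Real InformationTheory Set

lemma monotoneOn_klFun_sub_sub_two_add_inv_div_two :
    MonotoneOn (fun u => klFun u - (u - 2 + u⁻¹) / 2) (Ioi 0) := by
  have hderiv : ∀ u ∈ Ioi (0 : ℝ), HasDerivAt (fun u => klFun u - (u - 2 + u⁻¹) / 2)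
      (log u - (1 - (u ^ 2)⁻¹) / 2) u := fun u hu =>
    ((hasDerivAt_klFun hu.ne').sub ((((hasDerivAt_id' u).sub_const 2).add
      (hasDerivAt_inv hu.ne')).div_const 2)).congr_deriv (by ring)
  refine monotoneOn_of_hasDerivWithinAt_nonneg (convex_Ioi 0)
    (fun u hu => (hderiv u hu).continuousAt.continuousWithinAt)
    (fun u hu => (hderiv u (interior_subset hu)).hasDerivWithinAt) (fun u hu => ?_)
  rw [interior_Ioi] at hu
  have := one_sub_inv_le_log_of_pos (pow_pos hu 2)
  rw [log_pow, Nat.cast_ofNat] at this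
  linarith

lemma antitoneOn_klFun_sub_sq_sub_one_div_two :
    AntitoneOn (fun u => klFun u - (u - 1) ^ 2 / 2) (Ioi 0) := by
  have hderiv : ∀ u ∈ Ioi (0 : ℝ), HasDerivAt (fun u => klFun u - (u - 1) ^ 2 / 2)
      (log u - (u - 1)) u := fun u hu =>
    ((hasDerivAt_klFun hu.ne').sub
      ((((hasDerivAt_id' u).sub_const 1).pow 2).div_const 2)).congr_deriv (by norm_num)
  refine antitoneOn_of_hasDerivWithinAt_nonpos (convex_Ioi 0)
    (fun u hu => (hderiv u hu).continuousAt.continuousWithinAt)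
    (fun u hu => (hderiv u (interior_subset hu)).hasDerivWithinAt) (fun u hu => ?_)
  rw [interior_Ioi] at hu
  linarith [log_le_sub_one_of_pos hu]

lemma sub_two_add_inv_div_two {u : ℝ} (hu : 0 < u) :
    (u - 2 + u⁻¹) / 2 = (u - 1) ^ 2 / (2 * u) := by
  field_simp; ring

lemma klFun_le_sq_sub_one_div {a u : ℝ} (ha : 0 < a) (ha1 : a ≤ 1) (hau : a ≤ u) :
    klFun u ≤ (u - 1) ^ 2 / (2 * a) := by
  have hu : 0 < u := ha.trans_le hau
  rcases le_total u 1 with hu1 | hu1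
  · have := monotoneOn_klFun_sub_sub_two_add_inv_div_two hu (zero_lt_one' ℝ) hu1
    simp only [klFun_one, inv_one, sub_two_add_inv_div_two hu] at this
    calc klFun u ≤ (u - 1) ^ 2 / (2 * u) := by linarith
      _ ≤ (u - 1) ^ 2 / (2 * a) := by gcongr
  · have := antitoneOn_klFun_sub_sq_sub_one_div_two (zero_lt_one' ℝ) (zero_lt_one.trans_le hu1) hu1
    simp only [klFun_one] at this
    calc klFun u ≤ (u - 1) ^ 2 / 2 := by linarith
      _ ≤ (u - 1) ^ 2 / (2 * a) := by gcongr; linarith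

lemma sq_sub_one_div_le_klFun {b u : ℝ} (hu : 0 < u) (hb1 : 1 ≤ b) (hub : u ≤ b) :
    (u - 1) ^ 2 / (2 * b) ≤ klFun u := by
  rcases le_total u 1 with hu1 | hu1
  · have := antitoneOn_klFun_sub_sq_sub_one_div_two hu (zero_lt_one' ℝ) hu1
    simp only [klFun_one] at this
    calc (u - 1) ^ 2 / (2 * b) ≤ (u - 1) ^ 2 / 2 := by gcongr; linarith
      _ ≤ klFun u := by linarith
  · have := monotoneOn_klFun_sub_sub_two_add_inv_div_two (zero_lt_one' ℝ) hu hu1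
    simp only [klFun_one, inv_one, sub_two_add_inv_div_two hu] at this
    calc (u - 1) ^ 2 / (2 * b) ≤ (u - 1) ^ 2 / (2 * u) := by gcongr
      _ ≤ klFun u := by linarith

lemma sub_one_le_mul_log {u : ℝ} (hu : 0 < u) : u - 1 ≤ u * log u := by
  have := mul_le_mul_of_nonneg_left (one_sub_inv_le_log_of_pos hu) hu.le
  rwa [mul_sub, mul_one, mul_inv_cancel₀ hu.ne'] at this

lemma mul_log_le_mul_sub_one {u : ℝ} (hu : 0 < u) : u * log u ≤ u * (u - 1) :=
  mul_le_mul_of_nonneg_left (log_le_sub_one_of_pos hu) hu.le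

lemma sq_mul_sq_sub_one_le_sq_mul_sq_log {a u : ℝ} (ha : 0 < a) (ha1 : a ≤ 1) (hau : a ≤ u) :
    a ^ 2 * (u - 1) ^ 2 ≤ u ^ 2 * log u ^ 2 := by
  have hu : 0 < u := ha.trans_le hau
  have h1 := sub_one_le_mul_log hu
  have h2 := mul_log_le_mul_sub_one hu
  rcases le_total u 1 with hu1 | hu1
  · have : a * (1 - u) ≤ -(u * log u) := by
      nlinarith [mul_nonneg (sub_nonneg.2 hau) (sub_nonneg.2 hu1)]
    nlinarith [pow_le_pow_left₀ (by nlinarith) this 2]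
  · have : a * (u - 1) ≤ u * log u := by nlinarith
    nlinarith [pow_le_pow_left₀ (by nlinarith) this 2]

lemma sq_mul_sq_log_le_sq_mul_sq_sub_one {b u : ℝ} (hu : 0 < u) (hb1 : 1 ≤ b) (hub : u ≤ b) :
    u ^ 2 * log u ^ 2 ≤ b ^ 2 * (u - 1) ^ 2 := by
  have h1 := sub_one_le_mul_log hu
  have h2 := mul_log_le_mul_sub_one hu
  rcases le_total u 1 with hu1 | hu1
  · have : -(u * log u) ≤ b * (1 - u) := by nlinarith
    nlinarith [pow_le_pow_left₀ (by nlinarith [log_nonpos hu.le hu1]) this 2]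
  · have : u * log u ≤ b * (u - 1) := by nlinarith
    nlinarith [pow_le_pow_left₀ (by nlinarith [log_nonneg hu1]) this 2]

noncomputable def comparisonCoeff (x : ℝ) : ℝ := 2 * x + 6 * x * log x + 6 * x * log x ^ 2

lemma comparisonCoeff_le {a : ℝ} (ha : 3 / 4 ≤ a) (ha1 : a ≤ 1) :
    comparisonCoeff a ≤ 2 * a ^ 3 := by
  have h1 := sub_one_le_mul_log (by linarith : 0 < a)
  have h2 := log_le_sub_one_of_pos (by linarith : 0 < a)
  unfold comparisonCoeff
  nlinarith [mul_nonneg (sub_nonneg.2 h1) (sub_nonneg.2 h2)]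

lemma le_comparisonCoeff {b : ℝ} (hb1 : 1 ≤ b) (hb : b ≤ 5 / 4) :
    2 * b ^ 3 ≤ comparisonCoeff b := by
  have h1 := sub_nonneg.2 (sub_one_le_mul_log (by linarith : 0 < b))
  have h0 := log_nonneg hb1
  have hb1' := sub_nonneg.2 hb1
  unfold comparisonCoeff
  nlinarith [mul_nonneg h1 h0, mul_nonneg h1 h1, mul_nonneg h1 hb1', mul_nonneg hb1' hb1',
    mul_nonneg hb1' (sub_nonneg.2 hb), mul_nonneg (mul_nonneg hb1' hb1') (sub_nonneg.2 hb)]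

lemma comparisonCoeff_mul_klFun_le {a u : ℝ} (ha : 3 / 4 ≤ a) (ha1 : a ≤ 1) (hau : a ≤ u) :
    comparisonCoeff a * klFun u ≤ u ^ 2 * log u ^ 2 := by
  have ha0 : 0 < a := by linarith
  calc comparisonCoeff a * klFun u ≤ 2 * a ^ 3 * klFun u :=
        mul_le_mul_of_nonneg_right (comparisonCoeff_le ha ha1) (klFun_nonneg (by linarith))
    _ ≤ 2 * a ^ 3 * ((u - 1) ^ 2 / (2 * a)) := by
        gcongr; exact klFun_le_sq_sub_one_div ha0 ha1 hau
    _ = a ^ 2 * (u - 1) ^ 2 := by field_simp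
    _ ≤ u ^ 2 * log u ^ 2 := sq_mul_sq_sub_one_le_sq_mul_sq_log ha0 ha1 hau

lemma sq_mul_sq_log_le_comparisonCoeff_mul_klFun {b u : ℝ} (hu : 0 < u) (hb1 : 1 ≤ b)
    (hb : b ≤ 5 / 4) (hub : u ≤ b) : u ^ 2 * log u ^ 2 ≤ comparisonCoeff b * klFun u := by
  calc u ^ 2 * log u ^ 2 ≤ b ^ 2 * (u - 1) ^ 2 := sq_mul_sq_log_le_sq_mul_sq_sub_one hu hb1 hub
    _ = 2 * b ^ 3 * ((u - 1) ^ 2 / (2 * b)) := by field_simp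
    _ ≤ 2 * b ^ 3 * klFun u := by gcongr; exact sq_sub_one_div_le_klFun hu hb1 hub
    _ ≤ comparisonCoeff b * klFun u :=
        mul_le_mul_of_nonneg_right (le_comparisonCoeff hb1 hb) (klFun_nonneg hu.le)

lemma sum_klFun_eq_sum_mul_log {ι : Type*} [Fintype ι] {u : ι → ℝ}
    (hsum : ∑ i, u i = Fintype.card ι) : ∑ i, klFun (u i) = ∑ i, u i * log (u i) := by
  simp only [klFun_apply, Finset.sum_sub_distrib, Finset.sum_add_distrib, hsum]
  simp

lemma natCast_mul_entropyDelta (n : ℕ) (u : Fin n → ℝ) :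
    n * entropyDelta n u = ∑ j, u j * log (u j) := by
  rcases n.eq_zero_or_pos with rfl | hn
  · simp [entropyDelta]
  · rw [entropyDelta, ← mul_assoc, mul_one_div_cancel (by positivity), one_mul]

theorem stmt_6_general (n : ℕ) (β : ℝ) (hβ0 : 0 ≤ β) (hβ1 : β ≤ 1 / 4)
    (u : Fin n → ℝ) (hsum : ∑ j, u j = (n : ℝ))
    (hlb : ∀ j, 1 - β ≤ u j) (hub : ∀ j, u j ≤ 1 + β) :
    (2 * (1 - β) + 6 * (1 - β) * Real.log (1 - β) + 6 * (1 - β) * Real.log (1 - β) ^ 2)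
        * n * entropyDelta n u ≤ Delta22 n u ∧
      Delta22 n u ≤
        (2 * (1 + β) + 6 * (1 + β) * Real.log (1 + β) + 6 * (1 + β) * Real.log (1 + β) ^ 2)
          * n * entropyDelta n u := by
  have hδ (c : ℝ) : c * n * entropyDelta n u = ∑ j, c * klFun (u j) := by
    rw [mul_assoc, natCast_mul_entropyDelta, ← Finset.mul_sum,
      sum_klFun_eq_sum_mul_log (by simpa using hsum)]
  rw [hδ, hδ, Delta22]
  constructor <;> refine Finset.sum_le_sum fun j _ => ?_
  · exact comparisonCoeff_mul_klFun_le (by linarith) (by linarith) (hlb j)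
  · exact sq_mul_sq_log_le_comparisonCoeff_mul_klFun (by linarith [hlb j]) (by linarith)
      (by linarith) (hub j)

theorem stmt_6 (n : ℕ) (hn : 1 ≤ n) (β : ℝ) (hβ0 : 0 ≤ β) (hβ1 : β ≤ 1 / 4)
    (u : Fin n → ℝ) (hsum : ∑ j, u j = (n : ℝ))
    (hlb : ∀ j, 1 - β ≤ u j) (hub : ∀ j, u j ≤ 1 + β) :
    (2 * (1 - β) + 6 * (1 - β) * Real.log (1 - β) + 6 * (1 - β) * Real.log (1 - β) ^ 2)
        * n * entropyDelta n u ≤ Delta22 n u ∧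
      Delta22 n u ≤
        (2 * (1 + β) + 6 * (1 + β) * Real.log (1 + β) + 6 * (1 + β) * Real.log (1 + β) ^ 2)
          * n * entropyDelta n u :=
  stmt_6_general n β hβ0 hβ1 u hsum hlb hub
end

section
/- Assume ∑_{j=1}^n (u_j − 1)² ≤ 1/16 and set α := 1/(50√n). Then the updated vectors x(α)_j := x_j + α√(x_j/s_j)·p_j and s(α)_j := s_j + α√(s_j/x_j)·q_j satisfy ∑_{j=1}^n (x(α)_j s(α)_j/((1−α)μ) − 1)² ≤ 1/4. In particular, the entropy-based predictor step with step length 1/(50√n) maps the neighborhood condition ‖Xs/μ − e‖₂ ≤ 1/4 to ‖X(α)s(α)/((1−α)μ) − e‖₂ ≤ 1/2. -/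
/-!
Write `t = log u`. Since `X(α)s(α) = μ u + α v (p + q) + α² p q`, `p + q = w = v (δ - 1 - t)` and
`v² = μ u`, the new normalized products deviate from `e` by
`(u - e) + α/(1-α) · u (δ - t) + α²/((1-α)μ) · p q`.
The first term has norm at most `1/4`. Near `e` the logarithm is comparable to `u - 1`, so `‖t‖` and
`√n |δ|` are `O(1)` and the second term is `O(α)`. For the third, `p ⊥ q` gives
`‖p q‖₂ ≤ ‖w‖²/2 = O(μ n)`, and `α² n = 1/2500`.
-/

open Real Finset

lemma sq_mul_sq_log_le_sq_sub_one {a u : ℝ} (ha : 0 < a) (hau : a ≤ u) (ha1 : a ≤ 1) :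
    a ^ 2 * log u ^ 2 ≤ (u - 1) ^ 2 := by
  have hu : 0 < u := ha.trans_le hau
  have h_upper : log u ≤ u - 1 := log_le_sub_one_of_pos hu
  have h_lower : u - 1 ≤ u * log u := by
    have := mul_le_mul_of_nonneg_left (one_sub_inv_le_log_of_pos hu) hu.le
    rwa [mul_sub, mul_one, mul_inv_cancel₀ hu.ne'] at this
  rw [← mul_pow]
  rcases le_total 1 u with h1 | h1
  · have h_log : 0 ≤ log u := log_nonneg h1
    exact pow_le_pow_left₀ (by positivity) (by nlinarith) 2
  · have h_log : log u ≤ 0 := log_nonpos hu.le h1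
    rw [← neg_sq, ← neg_sq (u - 1)]
    exact pow_le_pow_left₀ (by nlinarith) (by nlinarith) 2

section
variable {ι : Type*} [Fintype ι]

lemma card_mul_sq_mean_le_sum_sq (f : ι → ℝ) :
    (Fintype.card ι : ℝ) * ((1 / Fintype.card ι) * ∑ j, f j) ^ 2 ≤ ∑ j, f j ^ 2 := by
  rcases (Nat.cast_nonneg (Fintype.card ι) : (0 : ℝ) ≤ _).eq_or_lt with h | h
  · rw [← h, zero_mul]
    positivity
  · have := sq_sum_le_card_mul_sum_sq (s := univ) (f := f)
    rw [card_univ] at this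
    rw [mul_pow, ← mul_assoc, div_pow, one_pow, mul_one_div, pow_two, div_mul_eq_div_div,
      div_self h.ne', one_div_mul_eq_div, div_le_iff₀ h]
    linarith

lemma sum_sq_sub_le (c : ℝ) (t : ι → ℝ) :
    ∑ j, (c - t j) ^ 2 ≤ 2 * ((Fintype.card ι : ℝ) * c ^ 2 + ∑ j, t j ^ 2) := by
  calc ∑ j, (c - t j) ^ 2 ≤ ∑ j, (2 * c ^ 2 + 2 * t j ^ 2) :=
        sum_le_sum fun j _ => by nlinarith [sq_nonneg (c + t j)]
    _ = _ := by
      rw [sum_add_distrib, ← mul_sum, ← mul_sum, sum_const, card_univ, nsmul_eq_mul]; ring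

lemma sum_sq_mul_le_of_sum_mul_eq_zero {p q : ι → ℝ} (h : ∑ j, p j * q j = 0) :
    ∑ j, (p j * q j) ^ 2 ≤ ((∑ j, (p j + q j) ^ 2) / 2) ^ 2 := by
  have h_pyth : ∑ j, (p j + q j) ^ 2 = ∑ j, p j ^ 2 + ∑ j, q j ^ 2 := by
    simp only [add_sq, sum_add_distrib, mul_assoc, ← mul_sum, h]; ring
  have h_prod : ∑ j, (p j * q j) ^ 2 ≤ (∑ j, p j ^ 2) * ∑ j, q j ^ 2 := by
    rw [sum_mul]
    exact sum_le_sum fun j _ => by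
      rw [mul_pow]
      exact mul_le_mul_of_nonneg_left
        (single_le_sum (f := fun i => q i ^ 2) (fun i _ => sq_nonneg _) (mem_univ j)) (sq_nonneg _)
  rw [h_pyth]
  nlinarith [sq_nonneg (∑ j, p j ^ 2 - ∑ j, q j ^ 2)]

lemma sum_sq_add_add_le (a b c : ι → ℝ) :
    ∑ j, (a j + b j + c j) ^ 2 ≤ 2 * ∑ j, a j ^ 2 + 4 * ∑ j, b j ^ 2 + 4 * ∑ j, c j ^ 2 := by
  simp only [mul_sum, ← sum_add_distrib]
  exact sum_le_sum fun j _ => by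
    nlinarith [sq_nonneg (a j - b j - c j), sq_nonneg (b j - c j)]

end

section
variable {ι : Type*} [Fintype ι] {u : ι → ℝ} (hu : ∑ j, (u j - 1) ^ 2 ≤ 1 / 16)
include hu

lemma mem_Icc_of_sum_sq_sub_one_le (j : ι) : u j ∈ Set.Icc (3 / 4 : ℝ) (5 / 4) := by
  have := (single_le_sum (f := fun i => (u i - 1) ^ 2) (fun i _ => sq_nonneg _)
    (mem_univ j)).trans hu
  constructor <;> nlinarith

lemma sum_sq_log_le : ∑ j, log (u j) ^ 2 ≤ 1 / 9 := by
  calc ∑ j, log (u j) ^ 2 ≤ ∑ j, 16 / 9 * (u j - 1) ^ 2 := sum_le_sum fun j _ => by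
        have := sq_mul_sq_log_le_sq_sub_one (a := 3 / 4) (by norm_num)
          (mem_Icc_of_sum_sq_sub_one_le hu j).1 (by norm_num)
        linarith
    _ ≤ 1 / 9 := by rw [← mul_sum]; linarith

lemma sum_sq_mul_log_le : ∑ j, (u j * log (u j)) ^ 2 ≤ 25 / 144 := by
  calc ∑ j, (u j * log (u j)) ^ 2 ≤ ∑ j, 25 / 16 * log (u j) ^ 2 := sum_le_sum fun j _ => by
        obtain ⟨h₁, h₂⟩ := mem_Icc_of_sum_sq_sub_one_le hu j
        rw [mul_pow]
        exact mul_le_mul_of_nonneg_right (by nlinarith) (sq_nonneg _)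
    _ ≤ 25 / 144 := by rw [← mul_sum]; linarith [sum_sq_log_le hu]

lemma card_mul_sq_entropy_mean_le :
    (Fintype.card ι : ℝ) * ((1 / Fintype.card ι) * ∑ j, u j * log (u j)) ^ 2 ≤ 25 / 144 :=
  (card_mul_sq_mean_le_sum_sq _).trans (sum_sq_mul_log_le hu)

variable {δ : ℝ} (hδ : (Fintype.card ι : ℝ) * δ ^ 2 ≤ 25 / 144)
include hδ

lemma sum_sq_mul_sub_log_le : ∑ j, (u j * (δ - log (u j))) ^ 2 ≤ 1 := by
  calc ∑ j, (u j * (δ - log (u j))) ^ 2 ≤ ∑ j, 25 / 16 * (δ - log (u j)) ^ 2 :=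
        sum_le_sum fun j _ => by
          obtain ⟨h₁, h₂⟩ := mem_Icc_of_sum_sq_sub_one_le hu j
          rw [mul_pow]
          exact mul_le_mul_of_nonneg_right (by nlinarith) (sq_nonneg _)
    _ ≤ 1 := by
      rw [← mul_sum]
      nlinarith [sum_sq_sub_le δ (fun j => log (u j)), sum_sq_log_le hu]

lemma sum_mul_sq_sub_one_sub_log_le [Nonempty ι] :
    ∑ j, u j * (δ - 1 - log (u j)) ^ 2 ≤ 8 * (Fintype.card ι : ℝ) := by
  have hcard : (1 : ℝ) ≤ Fintype.card ι := by exact_mod_cast Fintype.card_pos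
  calc ∑ j, u j * (δ - 1 - log (u j)) ^ 2 ≤ ∑ j, 5 / 4 * (δ - 1 - log (u j)) ^ 2 :=
        sum_le_sum fun j _ =>
          mul_le_mul_of_nonneg_right (mem_Icc_of_sum_sq_sub_one_le hu j).2 (sq_nonneg _)
    _ ≤ 8 * (Fintype.card ι : ℝ) := by
      rw [← mul_sum]
      nlinarith [sum_sq_sub_le (δ - 1) (fun j => log (u j)), sum_sq_log_le hu,
        sq_nonneg (δ + 1)]

lemma sum_sq_deviation_le {p q : ι → ℝ} {α μ : ℝ} (hα₀ : 0 ≤ α) (hα : α ≤ 1 / 50)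
    (hαn : α ^ 2 * Fintype.card ι ≤ 1 / 2500) (hμ : 0 < μ) (hpq : ∑ j, p j * q j = 0)
    (hw : ∑ j, (p j + q j) ^ 2 ≤ 8 * μ * Fintype.card ι) :
    ∑ j, ((u j - 1) + α / (1 - α) * (u j * (δ - log (u j)))
      + α ^ 2 / ((1 - α) * μ) * (p j * q j)) ^ 2 ≤ 1 / 4 := by
  have h1α : 0 < 1 - α := by linarith
  have hβ : α / (1 - α) ≤ 1 / 49 := by
    rw [div_le_div_iff₀ h1α (by norm_num)]; linarith
  have hγ : α ^ 2 / ((1 - α) * μ) * (4 * μ * Fintype.card ι) ≤ 1 / 600 := by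
    rw [div_mul_eq_mul_div, div_le_div_iff₀ (by nlinarith) (by norm_num)]
    nlinarith
  have hB : ∑ j, (α / (1 - α) * (u j * (δ - log (u j)))) ^ 2 ≤ (1 / 49) ^ 2 := by
    simp only [mul_pow _ (u _ * _), ← mul_sum]
    nlinarith [sum_sq_mul_sub_log_le hu hδ, pow_le_pow_left₀ (by positivity) hβ 2,
      sum_nonneg fun j (_ : j ∈ univ) => sq_nonneg (u j * (δ - log (u j)))]
  have hpq_sq : ∑ j, (p j * q j) ^ 2 ≤ (4 * μ * Fintype.card ι) ^ 2 :=
    (sum_sq_mul_le_of_sum_mul_eq_zero hpq).trans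
      (pow_le_pow_left₀ (by positivity) (by linarith) 2)
  have hC : ∑ j, (α ^ 2 / ((1 - α) * μ) * (p j * q j)) ^ 2 ≤ (1 / 600) ^ 2 := by
    simp only [mul_pow _ (p _ * q _), ← mul_sum]
    calc _ ≤ (α ^ 2 / ((1 - α) * μ)) ^ 2 * (4 * μ * Fintype.card ι) ^ 2 := by gcongr
      _ ≤ (1 / 600) ^ 2 := by rw [← mul_pow]; exact pow_le_pow_left₀ (by positivity) hγ 2
  linarith [sum_sq_add_add_le (fun j => u j - 1) (fun j => α / (1 - α) * (u j * (δ - log (u j))))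
    (fun j => α ^ 2 / ((1 - α) * μ) * (p j * q j))]

end

lemma one_div_fifty_mul_sqrt_le {m : ℝ} (hm : 1 ≤ m) : 1 / (50 * √m) ≤ 1 / 50 :=
  one_div_le_one_div_of_le (by norm_num) (by nlinarith [one_le_sqrt.mpr hm])

lemma sq_one_div_fifty_mul_sqrt_mul {m : ℝ} (hm : 0 < m) :
    (1 / (50 * √m)) ^ 2 * m = 1 / 2500 := by
  rw [div_pow, mul_pow, sq_sqrt hm.le]; field_simp; norm_num

lemma step_mul_step {x s : ℝ} (hx : 0 < x) (hs : 0 < s) (α p q : ℝ) :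
    (x + α * √(x / s) * p) * (s + α * √(s / x) * q)
      = x * s + α * √(x * s) * (p + q) + α ^ 2 * (p * q) := by
  have h₁ : √(x / s) * s = √(x * s) := by
    rw [← sqrt_sq hs.le, ← sqrt_mul (by positivity), sqrt_sq hs.le]; field_simp
  have h₂ : √(s / x) * x = √(x * s) := by
    rw [← sqrt_sq hx.le, ← sqrt_mul (by positivity), sqrt_sq hx.le]; field_simp
  have h₃ : √(x / s) * √(s / x) = 1 := by
    rw [← sqrt_mul (by positivity), div_mul_div_comm, mul_comm s x, div_self (by positivity),
      sqrt_one]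
  linear_combination α * p * h₁ + α * q * h₂ + α ^ 2 * p * q * h₃

lemma step_deviation_eq {x s μ α δ u p q : ℝ} (hx : 0 < x) (hs : 0 < s) (hμ : μ ≠ 0)
    (hα : α ≠ 1) (hu : x * s = μ * u) (hpq : p + q = √(x * s) * (δ - 1 - log u)) :
    (x + α * √(x / s) * p) * (s + α * √(s / x) * q) / ((1 - α) * μ) - 1
      = (u - 1) + α / (1 - α) * (u * (δ - log u)) + α ^ 2 / ((1 - α) * μ) * (p * q) := by
  have hv : √(x * s) ^ 2 = μ * u := by rw [sq_sqrt (mul_pos hx hs).le, hu]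
  have : 1 - α ≠ 0 := sub_ne_zero.mpr hα.symm
  rw [step_mul_step hx hs, hpq]
  field_simp
  linear_combination hu + α * (δ - 1 - log u) * hv

theorem stmt_15_general (n : ℕ) (x s : Fin n → ℝ)
    (hx : ∀ j, 0 < x j) (hs : ∀ j, 0 < s j)
    (μ : ℝ)
    (v u : Fin n → ℝ)
    (hv : ∀ j, v j = Real.sqrt (x j * s j))
    (hu : ∀ j, u j = x j * s j / μ)
    (δ : ℝ) (hδ : δ = (1 / (n : ℝ)) * ∑ j, u j * Real.log (u j))
    (w : Fin n → ℝ)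
    (hw : ∀ j, w j = -v j + δ * v j - v j * Real.log (u j))
    (L : Submodule ℝ (Fin n → ℝ)) (p q : Fin n → ℝ)
    (hpL : p ∈ L) (hperp : ∀ y ∈ L, ∑ j, (w j - p j) * y j = 0)
    (hq : ∀ j, q j = w j - p j)
    (hnbhd : ∑ j, (u j - 1) ^ 2 ≤ 1 / 16)
    (α : ℝ) (hα : α = 1 / (50 * Real.sqrt n))
    (xα sα : Fin n → ℝ)
    (hxα : ∀ j, xα j = x j + α * Real.sqrt (x j / s j) * p j)
    (hsα : ∀ j, sα j = s j + α * Real.sqrt (s j / x j) * q j) :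
    ∑ j, (xα j * sα j / ((1 - α) * μ) - 1) ^ 2 ≤ 1 / 4 := by
  rcases isEmpty_or_nonempty (Fin n) with _ | _
  · simp
  have j₀ : Fin n := Classical.arbitrary _
  have hμ : 0 < μ := (div_pos_iff_of_pos_left (mul_pos (hx j₀) (hs j₀))).mp
    (hu j₀ ▸ by linarith [(mem_Icc_of_sum_sq_sub_one_le hnbhd j₀).1])
  have hn : (1 : ℝ) ≤ n := by exact_mod_cast j₀.pos
  have hα50 : α ≤ 1 / 50 := hα ▸ one_div_fifty_mul_sqrt_le hn
  have hδn : (Fintype.card (Fin n) : ℝ) * δ ^ 2 ≤ 25 / 144 := by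
    simpa [hδ] using card_mul_sq_entropy_mean_le hnbhd
  have hxs : ∀ j, x j * s j = μ * u j := fun j => by rw [hu]; field_simp
  have hpq_add : ∀ j, p j + q j = v j * (δ - 1 - log (u j)) := fun j => by rw [hq, hw]; ring
  have hv2 : ∀ j, v j ^ 2 = μ * u j := fun j => by
    rw [hv, sq_sqrt (mul_pos (hx j) (hs j)).le, hxs]
  have hpq : ∑ j, p j * q j = 0 := by simpa [hq, mul_comm] using hperp p hpL
  have hw_sq : ∑ j, (p j + q j) ^ 2 ≤ 8 * μ * Fintype.card (Fin n) := by
    calc ∑ j, (p j + q j) ^ 2 = μ * ∑ j, u j * (δ - 1 - log (u j)) ^ 2 := by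
          simp only [hpq_add, mul_pow, hv2, mul_sum, mul_assoc]
      _ ≤ μ * (8 * Fintype.card (Fin n)) := by
          gcongr; exact sum_mul_sq_sub_one_sub_log_le hnbhd hδn
      _ = _ := by ring
  have hdev := fun j => step_deviation_eq (hx j) (hs j) hμ.ne' (by linarith : α < 1).ne (hxs j)
    ((hpq_add j).trans (by rw [hv]))
  simp only [hxα, hsα, hdev]
  refine sum_sq_deviation_le hnbhd hδn (by rw [hα]; positivity) hα50 ?_ hμ hpq hw_sq
  rw [Fintype.card_fin, hα, sq_one_div_fifty_mul_sqrt_mul (by linarith)]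

theorem stmt_15 (n : ℕ) (hn : 1 ≤ n) (x s : Fin n → ℝ)
    (hx : ∀ j, 0 < x j) (hs : ∀ j, 0 < s j)
    (μ : ℝ) (hμ : μ = (∑ j, x j * s j) / n)
    (v u : Fin n → ℝ)
    (hv : ∀ j, v j = Real.sqrt (x j * s j))
    (hu : ∀ j, u j = x j * s j / μ)
    (δ : ℝ) (hδ : δ = (1 / (n : ℝ)) * ∑ j, u j * Real.log (u j))
    (w : Fin n → ℝ)
    (hw : ∀ j, w j = -v j + δ * v j - v j * Real.log (u j))
    (L : Submodule ℝ (Fin n → ℝ)) (p q : Fin n → ℝ)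
    (hpL : p ∈ L) (hperp : ∀ y ∈ L, ∑ j, (w j - p j) * y j = 0)
    (hq : ∀ j, q j = w j - p j)
    (hnbhd : ∑ j, (u j - 1) ^ 2 ≤ 1 / 16)
    (α : ℝ) (hα : α = 1 / (50 * Real.sqrt n))
    (xα sα : Fin n → ℝ)
    (hxα : ∀ j, xα j = x j + α * Real.sqrt (x j / s j) * p j)
    (hsα : ∀ j, sα j = s j + α * Real.sqrt (s j / x j) * q j) :
    ∑ j, (xα j * sα j / ((1 - α) * μ) - 1) ^ 2 ≤ 1 / 4 :=
  stmt_15_general n x s hx hs μ v u hv hu δ hδ w hw L p q hpL hperp hq hnbhd α hα xα sα hxα hsα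
end
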